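/- For every n ≥ 1, the formula KBKF_n has a Q-Res+S refutation of length at most 5n, i.e., the empty clause can be derived from the clauses of KBKF_n using at most 5n applications of the rules S, R, U (plus axiom applications). -/

import Mathlib

/-! Generic framework for QBFs in prenex CNF. -/

inductive Q
  | ex
  | all
deriving DecidableEq

abbrev Lit (V : Type) := V × Bool
abbrev Clause (V : Type) := Finset (Lit V)
abbrev Cnf (V : Type) := Finset (Clause V)
abbrev QPrefix (V : Type) := List (Q × V)

variable {V : Type} [DecidableEq V]

/-- Negation of a literal. -/
def negLit (l : Lit V) : Lit V := (l.1, !l.2)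

/-- Evaluation of a literal under an assignment. -/
def evalLit (τ : V → Bool) (l : Lit V) : Bool := if l.2 then τ l.1 else !(τ l.1)

/-- An assignment satisfies a clause if some literal evaluates to true. -/
def SatClause (τ : V → Bool) (C : Clause V) : Prop := ∃ l ∈ C, evalLit τ l = true

/-- An assignment satisfies a CNF if it satisfies all clauses. -/
def SatCnf (τ : V → Bool) (φ : Cnf V) : Prop := ∀ C ∈ φ, SatClause τ C

/-- Recursive semantics of a quantifier prefix over a matrix predicate. -/
def QTrue : QPrefix V → (V → Bool) → ((V → Bool) → Prop) → Prop
  | [], τ, M => M τ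
  | (Q.ex, v) :: P, τ, M => ∃ b, QTrue P (Function.update τ v b) M
  | (Q.all, v) :: P, τ, M => ∀ b, QTrue P (Function.update τ v b) M

/-- Truth of a prenex CNF QBF (closed; the default assignment is irrelevant). -/
def QBFTrue (P : QPrefix V) (φ : Cnf V) : Prop :=
  QTrue P (fun _ => false) (fun τ => SatCnf τ φ)

/-- Two variables are in the same quantifier block of a prefix. -/
def SameBlock (P : QPrefix V) (v w : V) : Prop :=
  ∃ i j : ℕ, (∃ q : Q, P[i]? = some (q, v)) ∧ (∃ q : Q, P[j]? = some (q, w)) ∧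
    ∀ (k₁ k₂ : ℕ) (e₁ e₂ : Q × V), min i j ≤ k₁ → k₁ ≤ k₂ → k₂ ≤ max i j →
      P[k₁]? = some e₁ → P[k₂]? = some e₂ → e₁.1 = e₂.1

/-- An admissible literal map for a prefix: a bijection on literals commuting with
negation and moving variables only within their quantifier block. -/
structure Admissible (P : QPrefix V) (σ : Lit V → Lit V) : Prop where
  bij : Function.Bijective σ
  neg : ∀ l, σ (negLit l) = negLit (σ l)
  block : ∀ v w b c, σ (v, b) = (w, c) → v ≠ w → SameBlock P v w

/-- Action of a literal map on a clause. -/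
def mapClause (σ : Lit V → Lit V) (C : Clause V) : Clause V := C.image σ

/-- A (syntactic) symmetry of a QBF: an admissible map sending the clause set to itself. -/
def IsSymmetry (P : QPrefix V) (φ : Cnf V) (σ : Lit V → Lit V) : Prop :=
  Admissible P σ ∧ φ.image (mapClause σ) = φ

def IsExist (P : QPrefix V) (v : V) : Prop := (Q.ex, v) ∈ P
def IsUniv (P : QPrefix V) (v : V) : Prop := (Q.all, v) ∈ P

/-- A clause is a tautology if it contains complementary literals. -/
def Tauto (C : Clause V) : Prop := ∃ l ∈ C, negLit l ∈ C

/-- Rule R of Q-Res: resolution over an existential variable, with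
non-tautological resolvent. -/
def ResStep (P : QPrefix V) (E₁ E₂ E : Clause V) : Prop :=
  ∃ x, IsExist P x ∧ (x, true) ∈ E₁ ∧ (x, false) ∈ E₂ ∧
    E = E₁.erase (x, true) ∪ E₂.erase (x, false) ∧ ¬ Tauto E

/-- Prefix order on variables: `v` occurs strictly before `w`. -/
def LtP (P : QPrefix V) (v w : V) : Prop :=
  ∃ i j : ℕ, i < j ∧ (∃ q : Q, P[i]? = some (q, v)) ∧ (∃ q : Q, P[j]? = some (q, w))

/-- Rule U of Q-Res: universal reduction. -/
def URed (P : QPrefix V) (F₁ F : Clause V) : Prop :=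
  ∃ l, IsUniv P l.1 ∧ l ∈ F₁ ∧ negLit l ∉ F₁ ∧ F = F₁.erase l ∧
    ∀ k ∈ F₁.erase l, IsExist P k.1 → LtP P k.1 l.1

/-- Derivability in Q-Res (rules A, R, U). -/
inductive Derives (P : QPrefix V) (φ : Cnf V) : Clause V → Prop
  | ax {C : Clause V} : C ∈ φ → Derives P φ C
  | res {E₁ E₂ E : Clause V} :
      Derives P φ E₁ → Derives P φ E₂ → ResStep P E₁ E₂ E → Derives P φ E
  | ured {F₁ F : Clause V} : Derives P φ F₁ → URed P F₁ F → Derives P φ F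

/-- Derivability in Q-Res+S (rules A, R, U, S). -/
inductive DerivesS (P : QPrefix V) (φ : Cnf V) : Clause V → Prop
  | ax {C : Clause V} : C ∈ φ → DerivesS P φ C
  | res {E₁ E₂ E : Clause V} :
      DerivesS P φ E₁ → DerivesS P φ E₂ → ResStep P E₁ E₂ E → DerivesS P φ E
  | ured {F₁ F : Clause V} : DerivesS P φ F₁ → URed P F₁ F → DerivesS P φ F
  | sym {C : Clause V} {σ : Lit V → Lit V} :
      DerivesS P φ C → IsSymmetry P φ σ → DerivesS P φ (mapClause σ C)

/-- A clause available at step `i` of a derivation sequence: an input clause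
(axiom rule A, not counted as a step) or an earlier line. -/
def Avail (φ : Cnf V) (D : List (Clause V)) (i : ℕ) (C : Clause V) : Prop :=
  C ∈ φ ∨ ∃ j, ∃ _ : j < i, ∃ hj : j < D.length, D[j]'hj = C

/-- Line `C` at position `i` is justified by rule R or U from available clauses. -/
def StepOK (P : QPrefix V) (φ : Cnf V) (D : List (Clause V)) (i : ℕ) (C : Clause V) : Prop :=
  (∃ E₁ E₂, Avail φ D i E₁ ∧ Avail φ D i E₂ ∧ ResStep P E₁ E₂ C) ∨
  (∃ F₁, Avail φ D i F₁ ∧ URed P F₁ C)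

/-- Line justified by rule R, U or the symmetry rule S. -/
def StepOKS (P : QPrefix V) (φ : Cnf V) (D : List (Clause V)) (i : ℕ) (C : Clause V) : Prop :=
  StepOK P φ D i C ∨
  (∃ F₁ σ, Avail φ D i F₁ ∧ IsSymmetry P φ σ ∧ C = mapClause σ F₁)

/-- A Q-Res refutation, as a sequence of R/U steps ending in the empty clause;
its length is the number of R and U applications. -/
def IsRefutation (P : QPrefix V) (φ : Cnf V) (D : List (Clause V)) : Prop :=
  (∀ i (hi : i < D.length), StepOK P φ D i (D[i]'hi)) ∧ D.getLast? = some (∅ : Clause V)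

/-- A Q-Res+S refutation. -/
def IsRefutationS (P : QPrefix V) (φ : Cnf V) (D : List (Clause V)) : Prop :=
  (∀ i (hi : i < D.length), StepOKS P φ D i (D[i]'hi)) ∧ D.getLast? = some (∅ : Clause V)

/-- A derivation sequence using rules A, R, U: every line is an input clause or
follows from earlier lines by R or U. -/
def IsDerivation (P : QPrefix V) (φ : Cnf V) (D : List (Clause V)) : Prop :=
  ∀ i (hi : i < D.length), (D[i]'hi) ∈ φ ∨
    (∃ j k, ∃ hj : j < i, ∃ hk : k < i,
      ResStep P (D[j]'(Nat.lt_trans hj hi)) (D[k]'(Nat.lt_trans hk hi)) (D[i]'hi)) ∨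
    (∃ j, ∃ hj : j < i, URed P (D[j]'(Nat.lt_trans hj hi)) (D[i]'hi))

/-! The KBKF formula family (variables indexed 1..n). -/

inductive KV
  | x (i : ℕ)
  | y (i : ℕ)
  | a (i : ℕ)
  | z (i : ℕ)
deriving DecidableEq

/-- Prefix ∃x₁y₁∀a₁ … ∃xₙyₙ∀aₙ ∃z₁…zₙ. -/
def kPrefix (n : ℕ) : QPrefix KV :=
  ((List.range n).flatMap
    (fun j => [(Q.ex, KV.x (j+1)), (Q.ex, KV.y (j+1)), (Q.all, KV.a (j+1))])) ++
  (List.range n).map (fun j => (Q.ex, KV.z (j+1)))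

/-- The tail z̄₁ ∨ … ∨ z̄ₙ. -/
def kZneg (n : ℕ) : Clause KV := (Finset.range n).image (fun j => ((KV.z (j+1), false) : Lit KV))

/-- The clauses of KBKF_n. -/
def kbkf (n : ℕ) : Cnf KV :=
  {({(KV.x 1, false), (KV.y 1, false)} : Clause KV)} ∪
  ((Finset.range (n-1)).image (fun j =>
    ({(KV.x (j+1), true), (KV.a (j+1), false), (KV.x (j+2), false), (KV.y (j+2), false)} : Clause KV))) ∪
  ((Finset.range (n-1)).image (fun j =>
    ({(KV.y (j+1), true), (KV.a (j+1), true), (KV.x (j+2), false), (KV.y (j+2), false)} : Clause KV))) ∪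
  {({(KV.x n, true), (KV.a n, false)} : Clause KV) ∪ kZneg n,
   ({(KV.y n, true), (KV.a n, true)} : Clause KV) ∪ kZneg n} ∪
  ((Finset.range n).image (fun j => ({(KV.a (j+1), true), (KV.z (j+1), true)} : Clause KV))) ∪
  ((Finset.range n).image (fun j => ({(KV.a (j+1), false), (KV.z (j+1), true)} : Clause KV)))

/-- The symmetry σᵢ = (xᵢ yᵢ)(x̄ᵢ ȳᵢ)(aᵢ āᵢ) of KBKF_n. -/
def kSigma (i : ℕ) : Lit KV → Lit KV
  | (KV.x j, b) => if j = i then (KV.y j, b) else (KV.x j, b)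
  | (KV.y j, b) => if j = i then (KV.x j, b) else (KV.y j, b)
  | (KV.a j, b) => if j = i then (KV.a j, !b) else (KV.a j, b)
  | (KV.z j, b) => (KV.z j, b)

/-- The symmetry breaker ψₙ = (x̄₁∨y₁) ∧ … ∧ (x̄ₙ∨yₙ) for KBKF_n. -/
def kPsi (n : ℕ) : Cnf KV :=
  (Finset.range n).image (fun j => ({(KV.x (j+1), false), (KV.y (j+1), true)} : Clause KV))

/-! The QUPARITY formula family. -/

inductive PV
  | x (i : ℕ)
  | a (i : ℕ)
  | y (i : ℕ)
deriving DecidableEq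

/-- Prefix ∃x₁…xₙ ∀a₁a₂ ∃y₂…yₙ. -/
def pPrefix (n : ℕ) : QPrefix PV :=
  (List.range n).map (fun j => ((Q.ex, PV.x (j+1)) : Q × PV)) ++
  [(Q.all, PV.a 1), (Q.all, PV.a 2)] ++
  (List.range (n-1)).map (fun k => ((Q.ex, PV.y (k+2)) : Q × PV))

/-- a₁ ∨ a₂ with sign `s` (s = true: unprimed clauses, s = false: primed clauses). -/
def pAA (s : Bool) : Clause PV := {(PV.a 1, s), (PV.a 2, s)}

/-- The clauses of QUPARITY_n. -/
def quparity (n : ℕ) : Cnf PV :=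
  ((Finset.univ : Finset Bool).biUnion (fun s =>
    ({({(PV.x 1, false), (PV.x 2, false), (PV.y 2, false)} : Clause PV) ∪ pAA s,
      ({(PV.x 1, false), (PV.x 2, true), (PV.y 2, true)} : Clause PV) ∪ pAA s,
      ({(PV.x 1, true), (PV.x 2, false), (PV.y 2, true)} : Clause PV) ∪ pAA s,
      ({(PV.x 1, true), (PV.x 2, true), (PV.y 2, false)} : Clause PV) ∪ pAA s} : Cnf PV) ∪
    ((Finset.range (n-2)).biUnion (fun k =>
      ({({(PV.y (k+2), false), (PV.x (k+3), false), (PV.y (k+3), false)} : Clause PV) ∪ pAA s,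
        ({(PV.y (k+2), false), (PV.x (k+3), true), (PV.y (k+3), true)} : Clause PV) ∪ pAA s,
        ({(PV.y (k+2), true), (PV.x (k+3), false), (PV.y (k+3), true)} : Clause PV) ∪ pAA s,
        ({(PV.y (k+2), true), (PV.x (k+3), true), (PV.y (k+3), false)} : Clause PV) ∪ pAA s} : Cnf PV))))) ∪
  {({(PV.a 1, true), (PV.a 2, true), (PV.y n, true)} : Clause PV),
   ({(PV.a 1, false), (PV.a 2, false), (PV.y n, false)} : Clause PV)}

/-- The symmetry σ₁ = (x₁ x₂)(x̄₁ x̄₂) of QUPARITY_n. -/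
def pSigma1 : Lit PV → Lit PV
  | (PV.x 1, b) => (PV.x 2, b)
  | (PV.x 2, b) => (PV.x 1, b)
  | l => l

/-- The symmetry σᵢ = (xᵢ x̄ᵢ)(a₁ ā₁)(a₂ ā₂)(yᵢ ȳᵢ)⋯(yₙ ȳₙ) of QUPARITY_n, 2 ≤ i ≤ n. -/
def pSigma (n i : ℕ) : Lit PV → Lit PV
  | (PV.x j, b) => if j = i then (PV.x j, !b) else (PV.x j, b)
  | (PV.a j, b) => if j = 1 ∨ j = 2 then (PV.a j, !b) else (PV.a j, b)
  | (PV.y j, b) => if i ≤ j ∧ j ≤ n then (PV.y j, !b) else (PV.y j, b)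

/-- The symmetry breaker ψₙ = (x̄₁ ∨ x₂) ∧ x̄₂ ∧ … ∧ x̄ₙ for QUPARITY_n. -/
def pPsi (n : ℕ) : Cnf PV :=
  {({(PV.x 1, false), (PV.x 2, true)} : Clause PV)} ∪
  (Finset.range (n-1)).image (fun k => ({(PV.x (k+2), false)} : Clause PV))

/-! The modified family KBKF'_n with blocking universal variables b_j. -/

inductive KV2
  | x (i : ℕ)
  | b (i : ℕ)
  | y (i : ℕ)
  | a (i : ℕ)
  | z (i : ℕ)
deriving DecidableEq

/-- Prefix ∃x₁∀b₁∃y₁∀a₁ … ∃xₙ∀bₙ∃yₙ∀aₙ ∃z₁…zₙ of KBKF'_n. -/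
def k2Prefix (n : ℕ) : QPrefix KV2 :=
  ((List.range n).flatMap
    (fun j => [(Q.ex, KV2.x (j+1)), (Q.all, KV2.b (j+1)),
               (Q.ex, KV2.y (j+1)), (Q.all, KV2.a (j+1))])) ++
  (List.range n).map (fun j => (Q.ex, KV2.z (j+1)))

/-- The map σᵢ = (xᵢ yᵢ)(x̄ᵢ ȳᵢ)(aᵢ āᵢ) on the literals of KBKF'_n. -/
def k2Sigma (i : ℕ) : Lit KV2 → Lit KV2
  | (KV2.x j, c) => if j = i then (KV2.y j, c) else (KV2.x j, c)
  | (KV2.y j, c) => if j = i then (KV2.x j, c) else (KV2.y j, c)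
  | (KV2.a j, c) => if j = i then (KV2.a j, !c) else (KV2.a j, c)
  | (KV2.b j, c) => (KV2.b j, c)
  | (KV2.z j, c) => (KV2.z j, c)

/-!
Resolving `C_{2n}` successively with `B_2, B_4, …, B_{2n}` removes the `z`'s and gives
`x_n ∨ ā_1 ∨ … ∨ ā_n`; universal reduction of `ā_n` gives `x_n ∨ ā_1 ∨ … ∨ ā_{n-1}`, and the
symmetry `σ_n` turns this into `y_n ∨ ā_1 ∨ … ∨ ā_{n-1}` in a single step, where plain Q-Res has to
derive the `y`-copy separately (the source of its exponential lower bound). Resolving the two copies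
with `C_{2n-2}` on `x_n` and then on `y_n` gives `x_{n-1} ∨ ā_1 ∨ … ∨ ā_{n-1}`, and the same four
steps repeat down to the unit clauses `x_1` and `y_1`, which refute `C_1` with two resolutions:
`n + 2 + 4(n - 1) + 2 = 5n` steps.
-/

def IsDerivationS (P : QPrefix V) (φ : Cnf V) (D : List (Clause V)) : Prop :=
  ∀ i (hi : i < D.length), StepOKS P φ D i (D[i]'hi)

section Derivations

variable {P : QPrefix V} {φ : Cnf V} {D D' : List (Clause V)} {C : Clause V}

omit [DecidableEq V] in
lemma avail_length_of_mem (h : C ∈ φ ∨ C ∈ D) : Avail φ D D.length C := by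
  obtain h | h := h
  · exact .inl h
  · obtain ⟨j, hj, rfl⟩ := List.mem_iff_getElem.1 h
    exact .inr ⟨j, hj, hj, rfl⟩

omit [DecidableEq V] in
lemma Avail.append {i : ℕ} (h : Avail φ D i C) : Avail φ (D ++ D') i C := by
  obtain h | ⟨j, hji, hj, rfl⟩ := h
  · exact .inl h
  · exact .inr ⟨j, hji, by simp; omega, List.getElem_append_left hj⟩

lemma StepOKS.append {i : ℕ} (h : StepOKS P φ D i C) : StepOKS P φ (D ++ D') i C := by
  obtain (⟨E₁, E₂, h₁, h₂, h⟩ | ⟨F, hF, h⟩) | ⟨F, σ, hF, hσ, h⟩ := h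
  · exact .inl (.inl ⟨E₁, E₂, h₁.append, h₂.append, h⟩)
  · exact .inl (.inr ⟨F, hF.append, h⟩)
  · exact .inr ⟨F, σ, hF.append, hσ, h⟩

lemma IsDerivationS.nil : IsDerivationS P φ [] := fun _ hi => absurd hi (Nat.not_lt_zero _)

lemma IsDerivationS.snoc (hD : IsDerivationS P φ D) (hC : StepOKS P φ D D.length C) :
    IsDerivationS P φ (D ++ [C]) := by
  intro i hi
  obtain hi' | rfl : i < D.length ∨ i = D.length := by simp at hi; omega
  · rw [List.getElem_append_left hi']
    exact (hD i hi').append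
  · simpa using hC.append

lemma IsDerivationS.snoc_res {E₁ E₂ : Clause V} (hD : IsDerivationS P φ D)
    (h₁ : E₁ ∈ φ ∨ E₁ ∈ D) (h₂ : E₂ ∈ φ ∨ E₂ ∈ D) (h : ResStep P E₁ E₂ C) :
    IsDerivationS P φ (D ++ [C]) :=
  hD.snoc (.inl (.inl ⟨E₁, E₂, avail_length_of_mem h₁, avail_length_of_mem h₂, h⟩))

lemma IsDerivationS.snoc_ured {F : Clause V} (hD : IsDerivationS P φ D)
    (hF : F ∈ D) (h : URed P F C) : IsDerivationS P φ (D ++ [C]) :=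
  hD.snoc (.inl (.inr ⟨F, avail_length_of_mem (.inr hF), h⟩))

lemma IsDerivationS.snoc_sym {σ : Lit V → Lit V} (hD : IsDerivationS P φ D)
    (hC : C ∈ D) (hσ : IsSymmetry P φ σ) : IsDerivationS P φ (D ++ [mapClause σ C]) :=
  hD.snoc (.inr ⟨C, σ, avail_length_of_mem (.inr hC), hσ, rfl⟩)

end Derivations

omit [DecidableEq V] in
lemma SameBlock.symm {P : QPrefix V} {v w : V} (h : SameBlock P v w) : SameBlock P w v := by
  obtain ⟨i, j, hi, hj, hq⟩ := h
  exact ⟨j, i, hj, hi, fun k₁ k₂ e₁ e₂ h₁ h₁₂ h₂ =>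
    hq k₁ k₂ e₁ e₂ (by omega) h₁₂ (by omega)⟩

lemma isSymmetry_of_involutive {P : QPrefix V} {φ : Cnf V} {σ : Lit V → Lit V}
    (hσ : Function.Involutive σ) (hneg : ∀ l, σ (negLit l) = negLit (σ l))
    (hblock : ∀ v w b c, σ (v, b) = (w, c) → v ≠ w → SameBlock P v w)
    (hφ : ∀ C ∈ φ, mapClause σ C ∈ φ) : IsSymmetry P φ σ := by
  refine ⟨⟨hσ.bijective, hneg, hblock⟩, ?_⟩
  have hmap : Function.Involutive (mapClause σ) := fun C => by
    rw [mapClause, mapClause, Finset.image_image, hσ.comp_self, Finset.image_id]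
  exact (Finset.image_subset_iff.2 hφ).antisymm fun C hC =>
    Finset.mem_image.2 ⟨mapClause σ C, hφ C hC, hmap C⟩

lemma isExist_kPrefix_x {n i : ℕ} (h₁ : 1 ≤ i) (h₂ : i ≤ n) :
    IsExist (kPrefix n) (KV.x i) := by
  simp [IsExist, kPrefix]; exact ⟨i - 1, by omega, by omega⟩

lemma isExist_kPrefix_y {n i : ℕ} (h₁ : 1 ≤ i) (h₂ : i ≤ n) :
    IsExist (kPrefix n) (KV.y i) := by
  simp [IsExist, kPrefix]; exact ⟨i - 1, by omega, by omega⟩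

lemma isExist_kPrefix_z {n i : ℕ} (h₁ : 1 ≤ i) (h₂ : i ≤ n) :
    IsExist (kPrefix n) (KV.z i) := by
  simp [IsExist, kPrefix]; exact ⟨i - 1, by omega, by omega⟩

lemma isUniv_kPrefix_a {n i : ℕ} (h₁ : 1 ≤ i) (h₂ : i ≤ n) :
    IsUniv (kPrefix n) (KV.a i) := by
  simp [IsUniv, kPrefix]; exact ⟨i - 1, by omega, by omega⟩

lemma not_isExist_kPrefix_a {n i : ℕ} : ¬ IsExist (kPrefix n) (KV.a i) := by
  simp [IsExist, kPrefix]

def kBlock (j : ℕ) : QPrefix KV := [(Q.ex, KV.x (j+1)), (Q.ex, KV.y (j+1)), (Q.all, KV.a (j+1))]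

lemma kPrefix_getElem? {n j r : ℕ} (hj : j < n) (hr : r < 3) :
    (kPrefix n)[3 * j + r]? = (kBlock j)[r]? := by
  have hlen (m : ℕ) : ((List.range m).flatMap kBlock).length = 3 * m := by
    simp [List.length_flatMap, kBlock, mul_comm]
  have hsplit : (List.range n).flatMap kBlock = (List.range j).flatMap kBlock ++
      (kBlock j ++ ((List.range (n - j - 1)).map (j + 1 + ·)).flatMap kBlock) := by
    obtain ⟨m, rfl⟩ : ∃ m, n = j + 1 + m := ⟨n - j - 1, by omega⟩
    simp [List.range_add, List.range_succ, show j + 1 + m - j - 1 = m by omega]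
  change ((List.range n).flatMap kBlock ++ _)[3 * j + r]? = _
  rw [List.getElem?_append_left (by rw [hlen]; omega), hsplit,
    List.getElem?_append_right (by rw [hlen]; omega), hlen, Nat.add_sub_cancel_left,
    List.getElem?_append_left (by simp [kBlock]; omega)]

lemma ltP_kPrefix_x_a {n i : ℕ} (h₁ : 1 ≤ i) (h₂ : i ≤ n) :
    LtP (kPrefix n) (KV.x i) (KV.a i) := by
  obtain ⟨j, rfl⟩ : ∃ j, i = j + 1 := ⟨i - 1, by omega⟩
  exact ⟨3 * j + 0, 3 * j + 2, by omega, ⟨Q.ex, kPrefix_getElem? (by omega) (by omega)⟩,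
    ⟨Q.all, kPrefix_getElem? (by omega) (by omega)⟩⟩

lemma sameBlock_kPrefix_x_y {n i : ℕ} (h₁ : 1 ≤ i) (h₂ : i ≤ n) :
    SameBlock (kPrefix n) (KV.x i) (KV.y i) := by
  obtain ⟨j, rfl⟩ : ∃ j, i = j + 1 := ⟨i - 1, by omega⟩
  have hx : (kPrefix n)[3 * j + 0]? = some (Q.ex, KV.x (j + 1)) :=
    kPrefix_getElem? (by omega) (by omega)
  have hy : (kPrefix n)[3 * j + 1]? = some (Q.ex, KV.y (j + 1)) :=
    kPrefix_getElem? (by omega) (by omega)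
  refine ⟨3 * j + 0, 3 * j + 1, ⟨_, hx⟩, ⟨_, hy⟩,
    fun k₁ k₂ e₁ e₂ h₁ h₁₂ h₂ he₁ he₂ => ?_⟩
  have hk₁ : k₁ = 3 * j + 0 ∨ k₁ = 3 * j + 1 := by omega
  have hk₂ : k₂ = 3 * j + 0 ∨ k₂ = 3 * j + 1 := by omega
  rcases hk₁ with rfl | rfl <;> rcases hk₂ with rfl | rfl <;>
    simp only [hx, hy, Option.some.injEq] at he₁ he₂ <;> rw [← he₁, ← he₂]

/- In the paper's numbering: `kCx j = C_{2j+2}`, `kCy j = C_{2j+3}`, `kCxLast n = C_{2n}`,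
`kCyLast n = C_{2n+1}`, `kBpos j = B_{2j+1}`, `kBneg j = B_{2j+2}`. -/
def kC₁ : Clause KV := {(KV.x 1, false), (KV.y 1, false)}
def kCx (j : ℕ) : Clause KV :=
  {(KV.x (j+1), true), (KV.a (j+1), false), (KV.x (j+2), false), (KV.y (j+2), false)}
def kCy (j : ℕ) : Clause KV :=
  {(KV.y (j+1), true), (KV.a (j+1), true), (KV.x (j+2), false), (KV.y (j+2), false)}
def kCxLast (n : ℕ) : Clause KV := {(KV.x n, true), (KV.a n, false)} ∪ kZneg n
def kCyLast (n : ℕ) : Clause KV := {(KV.y n, true), (KV.a n, true)} ∪ kZneg n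
def kBpos (j : ℕ) : Clause KV := {(KV.a (j+1), true), (KV.z (j+1), true)}
def kBneg (j : ℕ) : Clause KV := {(KV.a (j+1), false), (KV.z (j+1), true)}

lemma kbkf_eq (n : ℕ) : kbkf n = {kC₁} ∪ (Finset.range (n-1)).image kCx ∪
    (Finset.range (n-1)).image kCy ∪ {kCxLast n, kCyLast n} ∪ (Finset.range n).image kBpos ∪
    (Finset.range n).image kBneg := rfl

lemma kSigma_involutive (i : ℕ) : Function.Involutive (kSigma i) := by
  rintro ⟨v | v | v | v, b⟩ <;> by_cases h : v = i <;> simp [kSigma, h]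

lemma kSigma_negLit (i : ℕ) (l : Lit KV) : kSigma i (negLit l) = negLit (kSigma i l) := by
  obtain ⟨v | v | v | v, b⟩ := l <;> by_cases h : v = i <;> simp [kSigma, negLit, h]

lemma mem_mapClause_kSigma {i : ℕ} {l : Lit KV} {C : Clause KV} :
    l ∈ mapClause (kSigma i) C ↔ kSigma i l ∈ C := by
  rw [mapClause, Finset.mem_image]
  exact ⟨fun ⟨m, hm, hml⟩ => hml ▸ (kSigma_involutive i m).symm ▸ hm,
    fun h => ⟨_, h, kSigma_involutive i l⟩⟩

lemma mapClause_kSigma_kCx (i j : ℕ) :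
    mapClause (kSigma i) (kCx j) = if i = j + 1 then kCy j else kCx j := by
  ext ⟨v | v | v | v, b⟩ <;> split_ifs <;>
    simp [mem_mapClause_kSigma, kSigma, kCx, kCy] <;>
    split_ifs <;> grind

lemma mapClause_kSigma_kCy (i j : ℕ) :
    mapClause (kSigma i) (kCy j) = if i = j + 1 then kCx j else kCy j := by
  ext ⟨v | v | v | v, b⟩ <;> split_ifs <;>
    simp [mem_mapClause_kSigma, kSigma, kCx, kCy] <;>
    split_ifs <;> grind

lemma mapClause_kSigma_kC₁ (i : ℕ) : mapClause (kSigma i) kC₁ = kC₁ := by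
  ext ⟨v | v | v | v, b⟩ <;> simp [mem_mapClause_kSigma, kSigma, kC₁] <;> split_ifs <;> grind

lemma mapClause_kSigma_kCxLast (i n : ℕ) :
    mapClause (kSigma i) (kCxLast n) = if i = n then kCyLast n else kCxLast n := by
  ext ⟨v | v | v | v, b⟩ <;> split_ifs <;>
    simp [mem_mapClause_kSigma, kSigma, kCxLast, kCyLast, kZneg] <;>
    split_ifs <;> grind

lemma mapClause_kSigma_kCyLast (i n : ℕ) :
    mapClause (kSigma i) (kCyLast n) = if i = n then kCxLast n else kCyLast n := by
  ext ⟨v | v | v | v, b⟩ <;> split_ifs <;>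
    simp [mem_mapClause_kSigma, kSigma, kCxLast, kCyLast, kZneg] <;>
    split_ifs <;> grind

lemma mapClause_kSigma_kBpos (i j : ℕ) :
    mapClause (kSigma i) (kBpos j) = if i = j + 1 then kBneg j else kBpos j := by
  ext ⟨v | v | v | v, b⟩ <;> split_ifs <;>
    simp [mem_mapClause_kSigma, kSigma, kBpos, kBneg] <;>
    split_ifs <;> grind

lemma mapClause_kSigma_kBneg (i j : ℕ) :
    mapClause (kSigma i) (kBneg j) = if i = j + 1 then kBpos j else kBneg j := by
  ext ⟨v | v | v | v, b⟩ <;> split_ifs <;>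
    simp [mem_mapClause_kSigma, kSigma, kBpos, kBneg] <;>
    split_ifs <;> grind

lemma kC₁_mem_kbkf (n : ℕ) : kC₁ ∈ kbkf n := by simp [kbkf_eq]

lemma kCx_mem_kbkf {n j : ℕ} (hj : j < n - 1) : kCx j ∈ kbkf n := by
  simp only [kbkf_eq, Finset.mem_union, Finset.mem_image, Finset.mem_range]; grind

lemma kCy_mem_kbkf {n j : ℕ} (hj : j < n - 1) : kCy j ∈ kbkf n := by
  simp only [kbkf_eq, Finset.mem_union, Finset.mem_image, Finset.mem_range]; grind

lemma kCxLast_mem_kbkf (n : ℕ) : kCxLast n ∈ kbkf n := by simp [kbkf_eq]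

lemma kCyLast_mem_kbkf (n : ℕ) : kCyLast n ∈ kbkf n := by simp [kbkf_eq]

lemma kBpos_mem_kbkf {n j : ℕ} (hj : j < n) : kBpos j ∈ kbkf n := by
  simp only [kbkf_eq, Finset.mem_union, Finset.mem_image, Finset.mem_range]; grind

lemma kBneg_mem_kbkf {n j : ℕ} (hj : j < n) : kBneg j ∈ kbkf n := by
  simp only [kbkf_eq, Finset.mem_union, Finset.mem_image, Finset.mem_range]; grind

lemma mapClause_kSigma_mem_kbkf (i n : ℕ) {C : Clause KV} (hC : C ∈ kbkf n) :
    mapClause (kSigma i) C ∈ kbkf n := by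
  simp only [kbkf_eq, Finset.mem_union, Finset.mem_singleton, Finset.mem_insert, Finset.mem_image,
    Finset.mem_range] at hC
  rcases hC with
    (((((rfl | ⟨j, hj, rfl⟩) | ⟨j, hj, rfl⟩) | (rfl | rfl)) | ⟨j, hj, rfl⟩) | ⟨j, hj, rfl⟩)
  · rw [mapClause_kSigma_kC₁]; exact kC₁_mem_kbkf n
  · rw [mapClause_kSigma_kCx]; split_ifs
    exacts [kCy_mem_kbkf hj, kCx_mem_kbkf hj]
  · rw [mapClause_kSigma_kCy]; split_ifs
    exacts [kCx_mem_kbkf hj, kCy_mem_kbkf hj]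
  · rw [mapClause_kSigma_kCxLast]; split_ifs
    exacts [kCyLast_mem_kbkf n, kCxLast_mem_kbkf n]
  · rw [mapClause_kSigma_kCyLast]; split_ifs
    exacts [kCxLast_mem_kbkf n, kCyLast_mem_kbkf n]
  · rw [mapClause_kSigma_kBpos]; split_ifs
    exacts [kBneg_mem_kbkf hj, kBpos_mem_kbkf hj]
  · rw [mapClause_kSigma_kBneg]; split_ifs
    exacts [kBpos_mem_kbkf hj, kBneg_mem_kbkf hj]

lemma eq_x_y_or_eq_y_x_of_kSigma {i : ℕ} {v w : KV} {b c : Bool} (h : kSigma i (v, b) = (w, c))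
    (hvw : v ≠ w) :
    (v = KV.x i ∧ w = KV.y i) ∨ (v = KV.y i ∧ w = KV.x i) := by
  rcases v with v | v | v | v <;> by_cases hv : v = i <;> simp_all [kSigma]

lemma isSymmetry_kSigma {n i : ℕ} (h₁ : 1 ≤ i) (h₂ : i ≤ n) :
    IsSymmetry (kPrefix n) (kbkf n) (kSigma i) := by
  refine isSymmetry_of_involutive (kSigma_involutive i) (kSigma_negLit i) ?_
    fun _ => mapClause_kSigma_mem_kbkf i n
  intro v w b c h hvw
  rcases eq_x_y_or_eq_y_x_of_kSigma h hvw with ⟨rfl, rfl⟩ | ⟨rfl, rfl⟩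
  exacts [sameBlock_kPrefix_x_y h₁ h₂, (sameBlock_kPrefix_x_y h₁ h₂).symm]

def negAs (k : ℕ) : Clause KV := (Finset.range k).image fun j => (KV.a (j+1), false)

def negZsFrom (k n : ℕ) : Clause KV := (Finset.Ico k n).image fun j => (KV.z (j+1), false)

/-- `x_n ∨ ā_n ∨ ā_1 ∨ … ∨ ā_k ∨ z̄_{k+1} ∨ … ∨ z̄_n`: the clause `C_{2n}` resolved with
`B_2, B_4, …, B_{2k}`. -/
def chainClause (n k : ℕ) : Clause KV :=
  insert (KV.x n, true) (insert (KV.a n, false) (negAs k ∪ negZsFrom k n))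

def xNegAs (i k : ℕ) : Clause KV := insert (KV.x i, true) (negAs k)

def yNegAs (i k : ℕ) : Clause KV := insert (KV.y i, true) (negAs k)

lemma mem_negAs {k : ℕ} {l : Lit KV} :
    l ∈ negAs k ↔ ∃ m, 1 ≤ m ∧ m ≤ k ∧ l = (KV.a m, false) := by
  simp only [negAs, Finset.mem_image, Finset.mem_range]
  constructor
  · rintro ⟨j, hj, rfl⟩
    exact ⟨j + 1, by omega, by omega, rfl⟩
  · rintro ⟨m, h₁, h₂, rfl⟩
    exact ⟨m - 1, by omega, by congr; omega⟩

lemma mem_negZsFrom {k n : ℕ} {l : Lit KV} :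
    l ∈ negZsFrom k n ↔ ∃ m, k < m ∧ m ≤ n ∧ l = (KV.z m, false) := by
  simp only [negZsFrom, Finset.mem_image, Finset.mem_Ico]
  constructor
  · rintro ⟨j, hj, rfl⟩
    exact ⟨j + 1, by omega, by omega, rfl⟩
  · rintro ⟨m, h₁, h₂, rfl⟩
    exact ⟨m - 1, by omega, by congr; omega⟩

lemma chainClause_zero (n : ℕ) : chainClause n 0 = kCxLast n := by
  rw [chainClause, kCxLast, kZneg, Finset.range_eq_Ico, ← negZsFrom]
  ext l
  simp [negAs]

lemma chainClause_self {n : ℕ} (hn : 1 ≤ n) : chainClause n n = xNegAs n n := by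
  ext ⟨v | v | v | v, b⟩ <;> simp [chainClause, xNegAs, mem_negAs, mem_negZsFrom] <;> grind

lemma resStep_kBneg_chainClause {n k : ℕ} (hk : k < n) :
    ResStep (kPrefix n) (kBneg k) (chainClause n k) (chainClause n (k + 1)) := by
  refine ⟨KV.z (k + 1), isExist_kPrefix_z (by omega) hk, by simp [kBneg], ?_, ?_, ?_⟩
  · simp [chainClause, mem_negZsFrom, hk]
  · ext ⟨v | v | v | v, b⟩ <;> simp [chainClause, kBneg, mem_negAs, mem_negZsFrom] <;> grind
  · rintro ⟨⟨v | v | v | v, b⟩, hl, hnl⟩ <;>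
      simp [chainClause, negLit, mem_negAs, mem_negZsFrom] at hl hnl <;> grind

lemma uRed_xNegAs {n j : ℕ} (hj : j < n) :
    URed (kPrefix n) (xNegAs (j + 1) (j + 1)) (xNegAs (j + 1) j) := by
  refine ⟨(KV.a (j + 1), false), isUniv_kPrefix_a (by omega) hj, by simp [xNegAs, mem_negAs],
    by simp [xNegAs, mem_negAs, negLit], ?_, ?_⟩
  · ext ⟨v | v | v | v, b⟩ <;> simp [xNegAs, mem_negAs]
    grind
  · rintro ⟨v | v | v | v, b⟩ hl hv <;> simp [xNegAs, mem_negAs] at hl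
    · exact hl.1 ▸ ltP_kPrefix_x_a (by omega) (by omega)
    · exact absurd hv not_isExist_kPrefix_a

lemma mapClause_kSigma_xNegAs (j : ℕ) :
    mapClause (kSigma (j + 1)) (xNegAs (j + 1) j) = yNegAs (j + 1) j := by
  ext ⟨v | v | v | v, b⟩ <;> simp [mem_mapClause_kSigma, kSigma, xNegAs, yNegAs, mem_negAs] <;>
    split_ifs <;> grind

lemma resStep_xNegAs_kCx {n j : ℕ} (hj : j + 2 ≤ n) :
    ResStep (kPrefix n) (xNegAs (j + 2) (j + 1)) (kCx j)
      (insert (KV.y (j + 2), false) (xNegAs (j + 1) (j + 1))) := by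
  refine ⟨KV.x (j + 2), isExist_kPrefix_x (by omega) hj, by simp [xNegAs], by simp [kCx],
    ?_, ?_⟩
  · ext ⟨v | v | v | v, b⟩ <;> simp [xNegAs, kCx, mem_negAs] <;> grind
  · rintro ⟨⟨v | v | v | v, b⟩, hl, hnl⟩ <;>
      simp [xNegAs, negLit, mem_negAs] at hl hnl <;> grind

lemma resStep_yNegAs {n j : ℕ} (hj : j + 2 ≤ n) :
    ResStep (kPrefix n) (yNegAs (j + 2) (j + 1))
      (insert (KV.y (j + 2), false) (xNegAs (j + 1) (j + 1))) (xNegAs (j + 1) (j + 1)) := by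
  refine ⟨KV.y (j + 2), isExist_kPrefix_y (by omega) hj, by simp [yNegAs], by simp, ?_, ?_⟩
  · ext ⟨v | v | v | v, b⟩ <;> simp [xNegAs, yNegAs, mem_negAs]
  · rintro ⟨⟨v | v | v | v, b⟩, hl, hnl⟩ <;>
      simp [xNegAs, negLit, mem_negAs] at hl hnl <;> grind

lemma resStep_xNegAs_kC₁ {n : ℕ} (hn : 1 ≤ n) :
    ResStep (kPrefix n) (xNegAs 1 0) kC₁ {(KV.y 1, false)} := by
  refine ⟨KV.x 1, isExist_kPrefix_x le_rfl hn, by simp [xNegAs], by simp [kC₁], ?_, ?_⟩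
  · ext ⟨v | v | v | v, b⟩ <;> simp [xNegAs, kC₁, negAs]
  · rintro ⟨⟨v | v | v | v, b⟩, hl, hnl⟩ <;> simp_all [negLit]

lemma resStep_yNegAs_one {n : ℕ} (hn : 1 ≤ n) :
    ResStep (kPrefix n) (yNegAs 1 0) {(KV.y 1, false)} ∅ := by
  refine ⟨KV.y 1, isExist_kPrefix_y le_rfl hn, by simp [yNegAs], by simp, ?_, ?_⟩
  · ext l; simp [yNegAs, negAs]
  · simp [Tauto]

lemma exists_derivationS_chainClause {n k : ℕ} (hk : k < n) :
    ∃ D, IsDerivationS (kPrefix n) (kbkf n) D ∧ D.length = k + 1 ∧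
      chainClause n (k + 1) ∈ D := by
  induction k with
  | zero =>
    have hC : chainClause n 0 ∈ kbkf n := chainClause_zero n ▸ kCxLast_mem_kbkf n
    exact ⟨_, IsDerivationS.nil.snoc_res (.inl (kBneg_mem_kbkf hk)) (.inl hC)
      (resStep_kBneg_chainClause hk), rfl, by simp⟩
  | succ k ih =>
    obtain ⟨D, hD, hlen, hC⟩ := ih (by omega)
    exact ⟨_, hD.snoc_res (.inl (kBneg_mem_kbkf hk)) (.inr hC) (resStep_kBneg_chainClause hk),
      by simp [hlen], by simp⟩

lemma IsDerivationS.append_xNegAs_yNegAs {n j : ℕ} {D : List (Clause KV)}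
    (hD : IsDerivationS (kPrefix n) (kbkf n) D) (hj : j < n)
    (hx : xNegAs (j + 1) (j + 1) ∈ D) :
    IsDerivationS (kPrefix n) (kbkf n) (D ++ [xNegAs (j + 1) j, yNegAs (j + 1) j]) := by
  have hD₁ := hD.snoc_ured hx (uRed_xNegAs hj)
  have hD₂ :=
    hD₁.snoc_sym (List.mem_concat_self ..) (isSymmetry_kSigma (i := j + 1) (by omega) hj)
  simpa [mapClause_kSigma_xNegAs] using hD₂

lemma IsDerivationS.append_xNegAs_self {n j : ℕ} {D : List (Clause KV)}
    (hD : IsDerivationS (kPrefix n) (kbkf n) D) (hj : j + 2 ≤ n)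
    (hx : xNegAs (j + 2) (j + 1) ∈ D) (hy : yNegAs (j + 2) (j + 1) ∈ D) :
    IsDerivationS (kPrefix n) (kbkf n)
      (D ++ [insert (KV.y (j + 2), false) (xNegAs (j + 1) (j + 1)), xNegAs (j + 1) (j + 1)]) := by
  have hD₁ := hD.snoc_res (.inr hx) (.inl (kCx_mem_kbkf (by omega))) (resStep_xNegAs_kCx hj)
  have hD₂ := hD₁.snoc_res (.inr (by simp [hy])) (.inr (by simp)) (resStep_yNegAs hj)
  simpa using hD₂

/-- `n` resolutions on the `z`'s and two lines for `j = n - 1`, then four lines (R, R, U, S) for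
each smaller `j`. -/
lemma exists_derivationS_xNegAs_yNegAs {n j : ℕ} (hj : j < n) :
    ∃ D, IsDerivationS (kPrefix n) (kbkf n) D ∧ D.length + 4 * j = 5 * n - 2 ∧
      xNegAs (j + 1) j ∈ D ∧ yNegAs (j + 1) j ∈ D := by
  obtain ⟨m, rfl⟩ : ∃ m, n = m + 1 := ⟨n - 1, by omega⟩
  induction Nat.le_of_lt_succ hj using Nat.decreasingInduction with
  | self =>
    obtain ⟨D, hD, hlen, hC⟩ := exists_derivationS_chainClause (Nat.lt_succ_self m)
    rw [chainClause_self (by omega)] at hC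
    exact ⟨_, hD.append_xNegAs_yNegAs (by omega) hC, by simp [hlen]; omega, by simp, by simp⟩
  | of_succ j hj ih =>
    obtain ⟨D, hD, hlen, hx, hy⟩ := ih (by omega)
    have hD₁ := hD.append_xNegAs_self (by omega) hx hy
    exact ⟨_, hD₁.append_xNegAs_yNegAs (by omega) (by simp), by simp; omega, by simp, by simp⟩

/-- KBKF_n has a Q-Res+S refutation with at most 5n applications
of the rules S, R, U. -/
theorem kbkf_qres_s_short_refutation : ∀ n : ℕ, 1 ≤ n →
    ∃ D : List (Clause KV),
      IsRefutationS (kPrefix n) (kbkf n) D ∧ D.length ≤ 5 * n := by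
  intro n hn
  obtain ⟨D, hD, hlen, hx, hy⟩ := exists_derivationS_xNegAs_yNegAs hn
  have hD₁ := hD.snoc_res (.inr hx) (.inl (kC₁_mem_kbkf n)) (resStep_xNegAs_kC₁ hn)
  have hD₂ := hD₁.snoc_res (.inr (by simp [hy])) (.inr (by simp)) (resStep_yNegAs_one hn)
  exact ⟨_, ⟨hD₂, List.getLast?_concat ..⟩, by simp; omega⟩
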